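/- In the setting of the adversary-matrix construction, let V = { y ∈ X^n : y_S ∉ T_S for every k-element subset S ⊆ [n] } be the set of valid columns, and let Γ be the submatrix of Γ̃ consisting of the columns indexed by V. If α_0 ≥ 0 (and α_1, …, α_{n−k} are arbitrary reals), then ‖Γ‖ ≥ α_0 · √( C(n,k) · |V| / q^n ). -/

import Mathlib

/-!
Every column of `Γ̃` has the same sum `C(n,k) α₀ q^{-(k-d)/2}`. Indeed, in a block `G̃_S` the
sum over `x_{Sᶜ}` annihilates every `E_m` with `m ≠ 0` (the all-ones vector spans the range of
`E_0`), and the sum over `x_S ∈ T_S` treats the tensors `e_v` of weight `≤ d` exactly as the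
sum over the whole cube does, because `T_S` is an orthogonal array of strength `d`. Testing `Γ`
against the all-ones vectors on its `C(n,k) q^{n-k+d}` rows and on `V` then gives the bound.
-/

open scoped BigOperators

/-- `T ⊆ X^ι` is an orthogonal array of strength `d` and index `1`. -/
def IsOA {X ι : Type*} [Fintype X] [Fintype ι] (d : ℕ) (T : Finset (ι → X)) : Prop :=
  T.card = Fintype.card X ^ d ∧
    ∀ D : Finset ι, D.card = d → ∀ y : ι → X, ∃! x, x ∈ T ∧ ∀ i ∈ D, x i = y i

/-- The weight of a tuple: the number of its nonzero entries. -/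
def wt {q : ℕ} {ι : Type*} [Fintype ι] (v : ι → Fin q) : ℕ :=
  (Finset.univ.filter fun i => (v i).val ≠ 0).card

/-- Entries of the orthogonal projector `E^{(ι)}_j` onto the span of the basis tensors
`e_{v_1} ⊗ ⋯ ⊗ e_{v_m}` of weight `j`. -/
noncomputable def Eproj {q : ℕ} {ι : Type*} [Fintype ι] [DecidableEq ι]
    (e : Fin q → Fin q → ℝ) (j : ℕ) : Matrix (ι → Fin q) (ι → Fin q) ℝ :=
  fun x y => ∑ v ∈ Finset.univ.filter (fun v : ι → Fin q => wt v = j),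
    (∏ i, e (v i) (x i)) * (∏ i, e (v i) (y i))

/-- The spectral norm (largest singular value) of a real matrix. -/
noncomputable def specNorm {m l : Type*} [Fintype m] [Fintype l] [DecidableEq l]
    (A : Matrix m l ℝ) : ℝ :=
  ‖LinearMap.toContinuousLinearMap (Matrix.toEuclideanLin A)‖

/-- Restriction `x_S` of a string to a set of coordinates. -/
def restrict {n q : ℕ} (x : Fin n → Fin q) (S : Finset (Fin n)) :
    {i // i ∈ S} → Fin q := fun i => x i.1

/-- Row index set of the matrix `Γ̃`: pairs `(x, S)` of an input and a `k`-subset with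
`x_S ∈ T_S`. -/
abbrev Rows (q n k : ℕ) (T : (S : Finset (Fin n)) → Finset ({i // i ∈ S} → Fin q)) :=
  {p : (Fin n → Fin q) × Finset (Fin n) // p.2.card = k ∧ restrict p.1 p.2 ∈ T p.2}

/-- The matrix `Γ̃`, the stacking of the blocks `G̃_S = Σ_m α_m F_S ⊗ E^{(n-k)}_m`. -/
noncomputable def Gam {q n : ℕ} (k d : ℕ)
    (T : (S : Finset (Fin n)) → Finset ({i // i ∈ S} → Fin q))
    (e : Fin q → Fin q → ℝ) (α : ℕ → ℝ) :
    Matrix (Rows q n k T) (Fin n → Fin q) ℝ :=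
  fun p y =>
    ∑ m ∈ Finset.range (n - k + 1),
      α m *
        (Real.sqrt ((q : ℝ) ^ (k - d)) *
          ∑ j ∈ Finset.range (d + 1), Eproj e j (restrict p.1.1 p.1.2) (restrict y p.1.2)) *
        Eproj e m (restrict p.1.1 p.1.2ᶜ) (restrict y p.1.2ᶜ)

open Finset

section Basis

variable {q : ℕ} [NeZero q] {e : Fin q → Fin q → ℝ} {ι : Type*} [Fintype ι]

lemma wt_eq_zero_iff (v : ι → Fin q) : wt v = 0 ↔ v = 0 := by
  rw [wt, card_eq_zero, filter_eq_empty_iff, funext_iff]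
  simp only [mem_univ, true_implies, not_not, Pi.zero_apply, Fin.ext_iff, Fin.val_zero]

lemma sum_basis_eq_ite (he : ∀ c, ∑ x, e c x * e 0 x = if c = 0 then 1 else 0)
    (he0 : ∀ x, e 0 x = 1 / Real.sqrt q) (c : Fin q) :
    ∑ x, e c x = if c = 0 then Real.sqrt q else 0 := by
  have hq : Real.sqrt q ≠ 0 := by simp [NeZero.ne q]
  have h := he c
  simp only [he0, mul_one_div, ← sum_div] at h
  rw [div_eq_iff hq] at h
  rw [h]
  split_ifs <;> simp

variable [DecidableEq ι]

lemma sum_prod_basis_eq_ite (he : ∀ c, ∑ x, e c x * e 0 x = if c = 0 then 1 else 0)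
    (he0 : ∀ x, e 0 x = 1 / Real.sqrt q) (v : ι → Fin q) :
    ∑ x : ι → Fin q, ∏ i, e (v i) (x i) = if v = 0 then Real.sqrt q ^ Fintype.card ι else 0 := by
  rw [← Fintype.prod_sum]
  split_ifs with hv
  · simp [hv, sum_basis_eq_ite he he0]
  · obtain ⟨i, hi⟩ := Function.ne_iff.1 hv
    exact prod_eq_zero (mem_univ i) (by rw [sum_basis_eq_ite he he0]; exact if_neg hi)

/-- Only the weight-`0` basis tensor `e_0 ⊗ ⋯ ⊗ e_0` can contribute to the sum. -/
lemma sum_Eproj_eq_ite_of_forall (he0 : ∀ x, e 0 x = 1 / Real.sqrt q)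
    (T : Finset (ι → Fin q)) (j : ℕ) (w : ι → Fin q)
    (hT : ∀ v : ι → Fin q, wt v = j → v ≠ 0 → ∑ x ∈ T, ∏ i, e (v i) (x i) = 0) :
    ∑ x ∈ T, Eproj e j x w = if j = 0 then (#T : ℝ) / (q : ℝ) ^ Fintype.card ι else 0 := by
  simp only [Eproj]
  rw [sum_comm]
  simp_rw [← sum_mul]
  split_ifs with hj
  · have hweight0 : univ.filter (fun v : ι → Fin q => wt v = j) = {0} := by
      ext v; simp [hj, wt_eq_zero_iff]
    rw [hweight0, sum_singleton]
    simp only [Pi.zero_apply, he0, prod_const, card_univ, sum_const, nsmul_eq_mul]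
    rw [mul_assoc, ← mul_pow, one_div_mul_one_div, Real.mul_self_sqrt (Nat.cast_nonneg _),
      one_div_pow, mul_one_div]
  · refine sum_eq_zero fun v hv => ?_
    have hv0 : v ≠ 0 := by
      rintro rfl
      exact hj ((mem_filter.1 hv).2.symm.trans ((wt_eq_zero_iff _).2 rfl))
    rw [hT v (mem_filter.1 hv).2 hv0, zero_mul]

lemma sum_Eproj_eq_ite (he : ∀ c, ∑ x, e c x * e 0 x = if c = 0 then 1 else 0)
    (he0 : ∀ x, e 0 x = 1 / Real.sqrt q) (j : ℕ) (w : ι → Fin q) :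
    ∑ x, Eproj e j x w = if j = 0 then 1 else 0 := by
  rw [sum_Eproj_eq_ite_of_forall he0 univ j w fun v _ hv => by
    rw [sum_prod_basis_eq_ite he he0, if_neg hv]]
  simp [NeZero.ne q]

end Basis

/-- Restriction to a `d`-set `D` of coordinates is a bijection from `T` onto `X ^ D`. -/
lemma IsOA.sum_comp_restrict {X ι M : Type*} [Fintype X] [Fintype ι] [DecidableEq ι]
    [AddCommMonoid M] {d : ℕ}
    {T : Finset (ι → X)} (hT : IsOA d T) {D : Finset ι} (hD : #D = d) (f : (D → X) → M) :
    ∑ x ∈ T, f (fun i => x i) = ∑ g, f g := by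
  classical
  have hinj : Set.InjOn (fun (x : ι → X) (i : D) => x i) T := by
    intro x hx x' hx' hxx'
    exact (hT.2 D hD x).unique ⟨hx, fun _ _ => rfl⟩
      ⟨hx', fun i hi => (congrFun hxx' ⟨i, hi⟩).symm⟩
  have himage : T.image (fun (x : ι → X) (i : D) => x i) = univ := by
    apply eq_univ_of_card
    rw [card_image_of_injOn hinj, hT.1, Fintype.card_fun, Fintype.card_coe, hD]
  rw [← himage, sum_image hinj]

lemma IsOA.sum_prod_basis_eq_zero {q : ℕ} [NeZero q] {e : Fin q → Fin q → ℝ}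
    (he : ∀ c, ∑ x, e c x * e 0 x = if c = 0 then 1 else 0)
    (he0 : ∀ x, e 0 x = 1 / Real.sqrt q) {ι : Type*} [Fintype ι] [DecidableEq ι] {d : ℕ}
    {T : Finset (ι → Fin q)} (hT : IsOA d T) (hd : d ≤ Fintype.card ι) {v : ι → Fin q}
    (hv : v ≠ 0) (hvd : wt v ≤ d) :
    ∑ x ∈ T, ∏ i, e (v i) (x i) = 0 := by
  obtain ⟨D, hsupp, -, hD⟩ := exists_subsuperset_card_eq (subset_univ _) hvd (by simpa using hd)
  have hvD : ∀ i ∉ D, v i = 0 := fun i hi => by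
    by_contra h
    exact hi (hsupp (mem_filter.2 ⟨mem_univ i, fun h' => h (Fin.ext h')⟩))
  have hsplit : ∀ x : ι → Fin q, ∏ i, e (v i) (x i)
      = (∏ i : D, e (v i) (x i)) * (1 / Real.sqrt q) ^ #Dᶜ := by
    intro x
    have hcompl : ∏ i ∈ Dᶜ, e (v i) (x i) = ∏ _i ∈ Dᶜ, 1 / Real.sqrt q :=
      prod_congr rfl fun i hi => by rw [hvD i (mem_compl.1 hi), he0]
    rw [← prod_mul_prod_compl D, prod_coe_sort D fun i => e (v i) (x i), hcompl, prod_const]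
  have hvD0 : (fun i : D => v i) ≠ 0 := fun h => hv <| funext fun i => by
    by_cases hi : i ∈ D
    · exact congrFun h ⟨i, hi⟩
    · exact hvD i hi
  simp_rw [hsplit, ← sum_mul]
  rw [hT.sum_comp_restrict hD fun g => ∏ i : D, e (v i) (g i),
    sum_prod_basis_eq_ite he he0, if_neg hvD0, zero_mul]

lemma IsOA.sum_sum_Eproj {q : ℕ} [NeZero q] {e : Fin q → Fin q → ℝ}
    (he : ∀ c, ∑ x, e c x * e 0 x = if c = 0 then 1 else 0)
    (he0 : ∀ x, e 0 x = 1 / Real.sqrt q) {ι : Type*} [Fintype ι] [DecidableEq ι] {d : ℕ}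
    {T : Finset (ι → Fin q)} (hT : IsOA d T) (hd : d ≤ Fintype.card ι) (w : ι → Fin q) :
    ∑ x ∈ T, ∑ j ∈ range (d + 1), Eproj e j x w = (q : ℝ) ^ d / (q : ℝ) ^ Fintype.card ι := by
  rw [sum_comm, sum_congr rfl fun j hj => sum_Eproj_eq_ite_of_forall he0 T j w fun v hvj hv =>
    hT.sum_prod_basis_eq_zero he he0 hd hv (hvj.trans_le (mem_range_succ_iff.1 hj)),
    sum_ite_eq' _ 0, if_pos (mem_range.2 d.succ_pos), hT.1, Fintype.card_fin, Nat.cast_pow]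

section Split

variable {n q : ℕ}

def restrictEquiv (S : Finset (Fin n)) :
    (Fin n → Fin q) ≃ ({i // i ∈ S} → Fin q) × ({i // i ∈ Sᶜ} → Fin q) :=
  (Equiv.piEquivPiSubtypeProd (· ∈ S) _).trans <| Equiv.prodCongr (Equiv.refl _) <|
    Equiv.piCongrLeft' _ (Equiv.subtypeEquivRight fun _ => mem_compl.symm)

lemma sum_mul_restrict_compl {R : Type*} [CommSemiring R] (S : Finset (Fin n))
    (f : ({i // i ∈ S} → Fin q) → R) (g : ({i // i ∈ Sᶜ} → Fin q) → R) :
    ∑ x : Fin n → Fin q, f (restrict x S) * g (restrict x Sᶜ) = (∑ a, f a) * ∑ b, g b := by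
  rw [sum_mul_sum, ← Fintype.sum_prod_type', ← (restrictEquiv S).sum_comp]
  rfl

lemma sum_filter_mul_restrict_compl {R : Type*} [CommSemiring R] (S : Finset (Fin n))
    (A : Finset ({i // i ∈ S} → Fin q))
    (f : ({i // i ∈ S} → Fin q) → R) (g : ({i // i ∈ Sᶜ} → Fin q) → R) :
    ∑ x with restrict x S ∈ A, f (restrict x S) * g (restrict x Sᶜ)
      = (∑ a ∈ A, f a) * ∑ b, g b := by
  simp_rw [sum_filter, ← ite_zero_mul]
  rw [sum_mul_restrict_compl S (fun a => if a ∈ A then f a else 0), sum_ite_mem, univ_inter]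

lemma sum_rows {k : ℕ} {M : Type*} [AddCommMonoid M]
    (T : (S : Finset (Fin n)) → Finset ({i // i ∈ S} → Fin q))
    (F : (Fin n → Fin q) → Finset (Fin n) → M) :
    ∑ p : Rows q n k T, F p.1.1 p.1.2
      = ∑ S ∈ powersetCard k univ, ∑ x with restrict x S ∈ T S, F x S := by
  classical
  rw [← Finset.sum_subtype (univ.filter fun p : (Fin n → Fin q) × Finset (Fin n) =>
      p.2.card = k ∧ restrict p.1 p.2 ∈ T p.2) (by simp) fun p => F p.1 p.2]
  rw [sum_filter, Fintype.sum_prod_type, sum_comm, powersetCard_eq_filter, sum_filter]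
  refine sum_congr rfl fun S _ => ?_
  split_ifs with hS <;> simp [sum_filter, hS]

end Split

section ColumnSums

variable {q n k d : ℕ} {T : (S : Finset (Fin n)) → Finset ({i // i ∈ S} → Fin q)}

lemma card_rows (hT : ∀ S : Finset (Fin n), #S = k → IsOA d (T S)) :
    Fintype.card (Rows q n k T) = n.choose k * (q ^ d * q ^ (n - k)) := by
  rw [Fintype.card_eq_sum_ones, sum_rows T fun _ _ => 1]
  have hblock : ∀ S ∈ powersetCard k (univ : Finset (Fin n)),
      ∑ x with restrict x S ∈ T S, 1 = q ^ d * q ^ (n - k) := fun S hS => by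
    have hS : #S = k := mem_powersetCard_univ.1 hS
    have h := sum_filter_mul_restrict_compl (R := ℕ) S (T S) (fun _ => 1) (fun _ => 1)
    simp only [mul_one, sum_const, smul_eq_mul] at h ⊢
    rw [h, (hT S hS).1, Fintype.card_fin, card_univ, Fintype.card_fun, Fintype.card_coe,
      card_compl, Fintype.card_fin, Fintype.card_fin, hS]
  rw [sum_congr rfl hblock, sum_const, card_powersetCard, card_univ, Fintype.card_fin,
    smul_eq_mul]

/-- The entry of `Γ̃` in row `(x, S)` and column `y`, i.e. the `(x_S, y_S) ⊗ (x_{Sᶜ}, y_{Sᶜ})`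
entry of the block `G̃_S`. -/
noncomputable def gamEntry (k d : ℕ) (e : Fin q → Fin q → ℝ) (α : ℕ → ℝ)
    (x : Fin n → Fin q) (S : Finset (Fin n)) (y : Fin n → Fin q) : ℝ :=
  ∑ m ∈ range (n - k + 1),
    α m * (Real.sqrt ((q : ℝ) ^ (k - d)) *
      ∑ j ∈ range (d + 1), Eproj e j (restrict x S) (restrict y S)) *
    Eproj e m (restrict x Sᶜ) (restrict y Sᶜ)

variable [NeZero q] {e : Fin q → Fin q → ℝ}

lemma sum_gamEntry_block (he : ∀ c, ∑ x, e c x * e 0 x = if c = 0 then 1 else 0)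
    (he0 : ∀ x, e 0 x = 1 / Real.sqrt q) (hd : d ≤ k) {S : Finset (Fin n)} (hS : #S = k)
    (hT : IsOA d (T S)) (α : ℕ → ℝ) (y : Fin n → Fin q) :
    ∑ x with restrict x S ∈ T S, gamEntry k d e α x S y
      = α 0 * Real.sqrt ((q : ℝ) ^ (k - d)) * ((q : ℝ) ^ d / (q : ℝ) ^ k) := by
  have hcard : Fintype.card {i // i ∈ S} = k := by rw [Fintype.card_coe, hS]
  set c := Real.sqrt ((q : ℝ) ^ (k - d))
  set F : ℕ → ({i // i ∈ S} → Fin q) → ℝ := fun m a =>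
    α m * (c * ∑ j ∈ range (d + 1), Eproj e j a (restrict y S))
  calc ∑ x with restrict x S ∈ T S, gamEntry k d e α x S y
      = ∑ m ∈ range (n - k + 1), ∑ x with restrict x S ∈ T S,
          F m (restrict x S) * Eproj e m (restrict x Sᶜ) (restrict y Sᶜ) := sum_comm
    _ = ∑ m ∈ range (n - k + 1), if m = 0 then ∑ a ∈ T S, F m a else 0 :=
        sum_congr rfl fun m _ => by
          refine (sum_filter_mul_restrict_compl S (T S) (F m) fun b => Eproj e m b _).trans ?_
          rw [sum_Eproj_eq_ite he he0, mul_ite, mul_one, mul_zero]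
    _ = α 0 * c * ∑ a ∈ T S, ∑ j ∈ range (d + 1), Eproj e j a (restrict y S) := by
        rw [sum_ite_eq' _ 0, if_pos (mem_range.2 (n - k).succ_pos), ← mul_sum, ← mul_sum,
          mul_assoc]
    _ = α 0 * c * ((q : ℝ) ^ d / (q : ℝ) ^ k) := by
        rw [hT.sum_sum_Eproj he he0 (hcard ▸ hd), hcard]

lemma sum_Gam_apply (he : ∀ c, ∑ x, e c x * e 0 x = if c = 0 then 1 else 0)
    (he0 : ∀ x, e 0 x = 1 / Real.sqrt q) (hd : d ≤ k)
    (hT : ∀ S : Finset (Fin n), #S = k → IsOA d (T S)) (α : ℕ → ℝ) (y : Fin n → Fin q) :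
    ∑ p : Rows q n k T, Gam k d T e α p y
      = n.choose k * (α 0 * Real.sqrt ((q : ℝ) ^ (k - d)) * ((q : ℝ) ^ d / (q : ℝ) ^ k)) := by
  refine (sum_rows T fun x S => gamEntry k d e α x S y).trans ?_
  rw [sum_congr rfl fun S hS => sum_gamEntry_block he he0 hd
    (mem_powersetCard_univ.1 hS) (hT S (mem_powersetCard_univ.1 hS)) α y, sum_const,
    card_powersetCard, card_univ, Fintype.card_fin, nsmul_eq_mul]

end ColumnSums

lemma norm_toLp_one {ι : Type*} [Fintype ι] :
    ‖(WithLp.toLp 2 (fun _ => 1) : EuclideanSpace ℝ ι)‖ = Real.sqrt (Fintype.card ι) := by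
  simp [EuclideanSpace.norm_eq]

lemma sum_le_specNorm_mul {m l : Type*} [Fintype m] [Fintype l] [DecidableEq l]
    (A : Matrix m l ℝ) :
    ∑ i, ∑ j, A i j
      ≤ specNorm A * (Real.sqrt (Fintype.card m) * Real.sqrt (Fintype.card l)) := by
  set L := LinearMap.toContinuousLinearMap (Matrix.toEuclideanLin A)
  set u : EuclideanSpace ℝ m := WithLp.toLp 2 fun _ => 1
  set v : EuclideanSpace ℝ l := WithLp.toLp 2 fun _ => 1
  have hinner : inner ℝ u (L v) = ∑ i, ∑ j, A i j := by
    simp [u, v, L, PiLp.inner_apply, Matrix.mulVec, dotProduct]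
  calc ∑ i, ∑ j, A i j = inner ℝ u (L v) := hinner.symm
    _ ≤ ‖u‖ * (‖L‖ * ‖v‖) := (real_inner_le_norm u (L v)).trans
        (mul_le_mul_of_nonneg_left (L.le_opNorm v) (norm_nonneg u))
    _ = specNorm A * (Real.sqrt (Fintype.card m) * Real.sqrt (Fintype.card l)) := by
        rw [norm_toLp_one, norm_toLp_one]; unfold specNorm; ring

theorem gamma_valid_columns_norm_lower_bound_general
    {q n k d : ℕ} [NeZero q] (hd : d + 1 ≤ k) (hn : k ≤ n)
    (e : Fin q → Fin q → ℝ)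
    (he : ∀ i j : Fin q, ∑ x, e i x * e j x = if i = j then 1 else 0)
    (he0 : ∀ x : Fin q, e 0 x = 1 / Real.sqrt q)
    (T : (S : Finset (Fin n)) → Finset ({i // i ∈ S} → Fin q))
    (hT : ∀ S : Finset (Fin n), S.card = k → IsOA d (T S))
    (α : ℕ → ℝ) (hα : 0 ≤ α 0)
    (V : Finset (Fin n → Fin q)) :
    α 0 * Real.sqrt ((n.choose k : ℝ) * (V.card : ℝ) / (q : ℝ) ^ n) ≤
      specNorm (fun (p : Rows q n k T) (y : ↥V) => Gam k d T e α p y.1) := by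
  have hbound := sum_le_specNorm_mul fun (p : Rows q n k T) (y : ↥V) => Gam k d T e α p y.1
  rw [sum_comm, sum_congr rfl fun y _ => sum_Gam_apply (fun c => he c 0) he0 (by omega) hT α y.1,
    sum_const, card_univ, Fintype.card_coe, card_rows hT, nsmul_eq_mul] at hbound
  rcases V.card.eq_zero_or_pos with hV | hV
  · simp [hV, specNorm]
  obtain ⟨r, rfl⟩ := Nat.exists_eq_add_of_le (Nat.le_of_succ_le hd)
  obtain ⟨t, rfl⟩ := Nat.exists_eq_add_of_le hn
  have hq : (0 : ℝ) < q := by exact_mod_cast Nat.pos_of_ne_zero (NeZero.ne q)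
  have hC : (0 : ℝ) < (d + r + t).choose (d + r) := by exact_mod_cast Nat.choose_pos (by omega)
  simp only [Nat.add_sub_cancel_left] at hbound
  push_cast at hbound
  refine le_of_mul_le_mul_right (hbound.trans_eq' ?_) (by positivity)
  rw [← sq_eq_sq₀ (by positivity) (by positivity)]
  simp only [mul_pow]
  rw [Real.sq_sqrt (by positivity), Real.sq_sqrt (by positivity), Real.sq_sqrt (by positivity),
    Real.sq_sqrt (by positivity)]
  field_simp
  ring

/-- Lemma 4 of the paper: let `V` be the set of valid columns (strings
containing no element of any of the orthogonal arrays), and let `Γ` be the submatrix of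
`Γ̃` consisting of the columns indexed by `V`.  If `α 0 ≥ 0`, then
`‖Γ‖ ≥ α_0 · √(C(n,k) · |V| / qⁿ)`. -/
theorem gamma_valid_columns_norm_lower_bound
    {q n k d : ℕ} [NeZero q] (hq : 2 ≤ q) (hk : 1 ≤ k) (hd : d + 1 ≤ k) (hn : k ≤ n)
    (e : Fin q → Fin q → ℝ)
    (he : ∀ i j : Fin q, ∑ x, e i x * e j x = if i = j then 1 else 0)
    (he0 : ∀ x : Fin q, e 0 x = 1 / Real.sqrt q)
    (T : (S : Finset (Fin n)) → Finset ({i // i ∈ S} → Fin q))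
    (hT : ∀ S : Finset (Fin n), S.card = k → IsOA d (T S))
    (α : ℕ → ℝ) (hα : 0 ≤ α 0)
    (V : Finset (Fin n → Fin q))
    (hV : ∀ y : Fin n → Fin q,
      y ∈ V ↔ ∀ S : Finset (Fin n), S.card = k → restrict y S ∉ T S) :
    α 0 * Real.sqrt ((n.choose k : ℝ) * (V.card : ℝ) / (q : ℝ) ^ n) ≤
      specNorm (fun (p : Rows q n k T) (y : ↥V) => Gam k d T e α p y.1) :=
  gamma_valid_columns_norm_lower_bound_general hd hn e he he0 T hT α hα V
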